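/- There exist absolute constants c, C > 0 with the following property: for every N ∈ ℕ and every integer n with 1 ≤ n ≤ N, setting I := [0, 1/(4N)] and ⟨sin(2πn·)⟩_I := 4N ∫_0^{1/(4N)} sin(2πnσ) dσ, one has, for every θ ∈ [0, 1/(16N)], c·(n/N) ≤ ⟨sin(2πn·)⟩_I − sin(2πnθ) ≤ C·(n/N), and also c·(n/N) ≤ ⟨sin(2πn·)⟩_I ≤ C·(n/N). -/

import Mathlib

open MeasureTheory

/-- The average of `σ ↦ sin (2πnσ)` over the interval `I = [0, 1/(4N)]`. -/
noncomputable def sinAvg (N n : ℕ) : ℝ :=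
  (4 * N) * ∫ σ in (0:ℝ)..(1 / (4 * N)), Real.sin (2 * Real.pi * n * σ)

lemma one_sub_cos_eq (x : ℝ) : 1 - Real.cos x = 2 * Real.sin (x/2) ^ 2 := by
  have h1 := Real.cos_two_mul (x/2)
  have h2 := Real.sin_sq_add_cos_sq (x/2)
  have h3 : 2 * (x/2) = x := by ring
  rw [h3] at h1
  nlinarith

lemma one_sub_cos_lower {x : ℝ} (h0 : 0 < x) (h2 : x ≤ Real.pi / 2) :
    (33/100) * x ^ 2 ≤ 1 - Real.cos x := by
  have hpi : Real.pi < 3.15 := Real.pi_lt_d2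
  have hxu : x ≤ 1.575 := by linarith
  have hx1 : x / 2 ≤ 1 := by linarith
  have hu : x ^ 2 ≤ 2.49 := by nlinarith
  have hs : x / 2 - (x/2)^3 / 4 < Real.sin (x/2) := by
    linarith [Real.sin_gt_sub_cube (by linarith : 0 < x / 2), pow_pos (by linarith : (0:ℝ) < x / 2) 3]
  have hpos : 0 ≤ x / 2 - (x/2)^3 / 4 := by
    nlinarith [mul_le_mul_of_nonneg_left hu h0.le]
  have hsq : (x / 2 - (x/2)^3 / 4) ^ 2 ≤ Real.sin (x/2) ^ 2 := by
    apply sq_le_sq'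
    · linarith
    · linarith
  rw [one_sub_cos_eq]
  have h17 : 0 ≤ 17/100 - x^2/16 := by linarith
  nlinarith [hsq, mul_nonneg (sq_nonneg x) h17, sq_nonneg (x^3)]

lemma one_sub_cos_upper {x : ℝ} (h0 : 0 ≤ x) : 1 - Real.cos x ≤ x ^ 2 / 2 := by
  rw [one_sub_cos_eq]
  have h1 : Real.sin (x/2) ≤ x/2 := Real.sin_le (by linarith)
  have h2 : -(x/2) ≤ Real.sin (x/2) := by
    have := Real.neg_one_le_sin (x/2)
    rcases le_or_gt 1 (x/2) with h | h
    · linarith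
    · nlinarith [Real.sin_nonneg_of_nonneg_of_le_pi (by linarith : (0:ℝ) ≤ x/2)
        (by nlinarith [Real.pi_gt_three] : x/2 ≤ Real.pi)]
  nlinarith [sq_le_sq' h2 h1]

lemma sinAvg_eq (N n : ℕ) (hN : 1 ≤ N) (hn : 1 ≤ n) :
    sinAvg N n = (1 - Real.cos (Real.pi * n / (2 * N))) / (Real.pi * n / (2 * N)) := by
  have hNpos : (0:ℝ) < N := by exact_mod_cast hN
  have hnpos : (0:ℝ) < n := by exact_mod_cast hn
  have hpi := Real.pi_pos
  have hc : (2 * Real.pi * n : ℝ) ≠ 0 := by positivity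
  have key : ∫ σ in (0:ℝ)..(1 / (4 * N)), Real.sin (2 * Real.pi * n * σ)
      = (2 * Real.pi * n)⁻¹ * (1 - Real.cos (Real.pi * n / (2 * N))) := by
    have h := intervalIntegral.integral_comp_mul_left (a := (0:ℝ)) (b := 1 / (4 * N))
      (fun x => Real.sin x) hc
    simp only [smul_eq_mul] at h
    rw [h, integral_sin]
    have h1 : (2 * Real.pi * n * 0 : ℝ) = 0 := by ring
    have h2 : (2 * Real.pi * n * (1 / (4 * N)) : ℝ) = Real.pi * n / (2 * N) := by
      field_simp; ring
    rw [h1, h2, Real.cos_zero]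
  rw [sinAvg, key]
  field_simp
  ring

/-- There are absolute constants `c, C > 0` such that for all `N ∈ ℕ`,
`1 ≤ n ≤ N`, and `θ ∈ [0, 1/(16N)]`, one has
`c·(n/N) ≤ ⟨sin(2πn·)⟩_I − sin(2πnθ) ≤ C·(n/N)` and `c·(n/N) ≤ ⟨sin(2πn·)⟩_I ≤ C·(n/N)`,
where `I = [0, 1/(4N)]`. -/
theorem stmt_19 :
    ∃ c C : ℝ, 0 < c ∧ 0 < C ∧ ∀ N : ℕ, 1 ≤ N → ∀ n : ℕ, 1 ≤ n → n ≤ N →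
      (∀ θ ∈ Set.Icc (0:ℝ) (1 / (16 * N)),
          c * (n / N) ≤ sinAvg N n - Real.sin (2 * Real.pi * n * θ) ∧
          sinAvg N n - Real.sin (2 * Real.pi * n * θ) ≤ C * (n / N)) ∧
      c * (n / N) ≤ sinAvg N n ∧ sinAvg N n ≤ C * (n / N) := by
  refine ⟨1/10, 1, by norm_num, by norm_num, fun N hN n hn hnN => ?_⟩
  have hNpos : (0:ℝ) < N := by exact_mod_cast hN
  have hnpos : (0:ℝ) < n := by exact_mod_cast hn
  have hnN' : (n:ℝ) ≤ N := by exact_mod_cast hnN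
  have hpi := Real.pi_pos
  have hpi3 := Real.pi_gt_three
  have hpi4 := Real.pi_le_four
  set x : ℝ := Real.pi * n / (2 * N) with hxdef
  set r : ℝ := (n:ℝ) / N with hrdef
  have hr0 : 0 ≤ r := by positivity
  have hx0 : 0 < x := by positivity
  have hx2 : x ≤ Real.pi / 2 := by
    rw [hxdef, div_le_div_iff₀ (by positivity) (by norm_num)]
    nlinarith
  have havg : sinAvg N n = (1 - Real.cos x) / x := sinAvg_eq N n hN hn
  have hlow := one_sub_cos_lower hx0 hx2
  have hup := one_sub_cos_upper hx0.le
  have havg_low : (33/100) * x ≤ sinAvg N n := by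
    rw [havg, le_div_iff₀ hx0]; nlinarith
  have havg_up : sinAvg N n ≤ x / 2 := by
    rw [havg, div_le_iff₀ hx0]; nlinarith
  have hxr : x = (Real.pi / 2) * r := by rw [hxdef, hrdef]; field_simp
  have hxr_lo : (3/2) * r ≤ x := by
    nlinarith [mul_nonneg (by linarith : (0:ℝ) ≤ Real.pi - 3) hr0]
  have hxr_hi : x ≤ 2 * r := by
    nlinarith [mul_nonneg (by linarith : (0:ℝ) ≤ 4 - Real.pi) hr0]
  constructor
  · intro θ hθ
    obtain ⟨hθ0, hθ1⟩ := hθ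
    have harg0 : 0 ≤ 2 * Real.pi * n * θ := mul_nonneg (by positivity) hθ0
    have harg1 : 2 * Real.pi * n * θ ≤ x / 4 := by
      rw [hxdef]
      calc 2 * Real.pi * n * θ ≤ 2 * Real.pi * n * (1 / (16 * N)) :=
            mul_le_mul_of_nonneg_left hθ1 (by positivity)
        _ = Real.pi * n / (2 * N) / 4 := by field_simp; ring
    have hsin_le : Real.sin (2 * Real.pi * n * θ) ≤ x / 4 :=
      le_trans (Real.sin_le harg0) harg1
    have hsin_nonneg : 0 ≤ Real.sin (2 * Real.pi * n * θ) :=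
      Real.sin_nonneg_of_nonneg_of_le_pi harg0 (by linarith)
    constructor
    · linarith
    · linarith
  · constructor
    · linarith
    · linarith
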